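/- Let σₓ > 0 and σ_p > 0 be real numbers such that for every b > 0 and every a > 0 one has 2 − a·(σₓ²/b² + b²σ_p²) ≤ B(a), where B(a) = 2/(1 + √((1 − cos a)/2)). Then σₓ·σ_p ≥ 1/2. -/

import Mathlib

/-!
With `b² = σₓ/σ_p` the bracket `σₓ²/b² + b²σ_p²` equals `2σₓσ_p`, so the hypothesis becomes
`2 − 2aσₓσ_p ≤ B(a)` for `a > 0`. Both sides equal `2` at `a = 0`, and on `[0, π]` the bound is
`B(a) = 2/(1 + sin(a/2))`, whose slope at `0` is `−1`. Comparing slopes gives `−2σₓσ_p ≤ −1`.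
-/

open Real Filter Topology Set

lemma exists_pos_sq_div_sq_add_sq_mul_sq_eq {x p : ℝ} (hx : 0 < x) (hp : 0 < p) :
    ∃ b > 0, x ^ 2 / b ^ 2 + b ^ 2 * p ^ 2 = 2 * (x * p) := by
  refine ⟨√(x / p), sqrt_pos.2 (div_pos hx hp), ?_⟩
  rw [sq_sqrt (div_pos hx hp).le]
  field_simp
  ring

lemma neg_le_of_hasDerivWithinAt_Ioi {f : ℝ → ℝ} {f' k x : ℝ}
    (hf : HasDerivWithinAt f f' (Ioi x) x) (hle : ∀ᶠ y in 𝓝[>] x, f x - k * (y - x) ≤ f y) :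
    -k ≤ f' := by
  rw [hasDerivWithinAt_iff_tendsto_slope' (self_notMem_Ioi)] at hf
  refine ge_of_tendsto hf ?_
  filter_upwards [hle, self_mem_nhdsWithin] with y hy hxy
  rw [slope_def_field, le_div_iff₀ (sub_pos.2 hxy)]
  linarith

lemma hasDerivAt_two_div_one_add_sin_half :
    HasDerivAt (fun a => 2 / (1 + sin (a / 2))) (-1) 0 := by
  have hden := (((hasDerivAt_id' (0 : ℝ)).div_const 2).sin).const_add 1
  exact ((hasDerivAt_const 0 (2 : ℝ)).fun_div hden (by simp)).congr_deriv (by norm_num)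

/-- **The ChUR implies the Heisenberg uncertainty relation.**
If `σₓ, σ_p > 0` satisfy the weakened characteristic-function uncertainty relation
`2 − a·(σₓ²/b² + b²σ_p²) ≤ B(a)` for all `a, b > 0`, where
`B(a) = 2/(1 + √((1 − cos a)/2))`, then `σₓ·σ_p ≥ 1/2`. -/
theorem chur_implies_heisenberg (σx σp : ℝ) (hσx : 0 < σx) (hσp : 0 < σp)
    (h : ∀ b : ℝ, 0 < b → ∀ a : ℝ, 0 < a →
      2 - a * (σx ^ 2 / b ^ 2 + b ^ 2 * σp ^ 2)
        ≤ 2 / (1 + Real.sqrt ((1 - Real.cos a) / 2))) :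
    σx * σp ≥ 1 / 2 := by
  obtain ⟨b, hb, hbracket⟩ := exists_pos_sq_div_sq_add_sq_mul_sq_eq hσx hσp
  have hslope := neg_le_of_hasDerivWithinAt_Ioi (k := 2 * (σx * σp))
    hasDerivAt_two_div_one_add_sin_half.hasDerivWithinAt ?_
  · linarith
  filter_upwards [Ioo_mem_nhdsGT pi_pos] with a ha
  have hB := h b hb a ha.1
  rw [hbracket, ← sin_half_eq_sqrt ha.1.le (by linarith [ha.2, pi_pos])] at hB
  simp only [sub_zero, zero_div, sin_zero, add_zero, div_one]
  linarith
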